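/- arXiv:2511.22814 — 4 statements merged into one kernel-verified Lean document; each statement's English description precedes it below -/
import Mathlib

section
/- Let f1, ..., fk be sequences from ℕ to ℚ whose first differences Δfᵢ(n) := fᵢ(n+1) − fᵢ(n) are all eventually periodic. Define g(n) = minᵢ fᵢ(n). Then the first difference Δg(n) := g(n+1) − g(n) is eventually periodic. -/
/-- A sequence `h : ℕ → ℚ` is eventually periodic if there exist `n₀` and `T ≥ 1`
such that `h (n + T) = h n` for all `n ≥ n₀`. -/
def EventuallyPeriodic (h : ℕ → ℚ) : Prop :=
  ∃ n₀ T : ℕ, 1 ≤ T ∧ ∀ n, n₀ ≤ n → h (n + T) = h n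

private lemma per_mul (h : ℕ → ℚ) (n₀ T' : ℕ)
    (hp : ∀ n, n₀ ≤ n → h (n + T') = h n) :
    ∀ a n, n₀ ≤ n → h (n + a * T') = h n := by
  intro a
  induction a with
  | zero => simp
  | succ a ih =>
    intro n hn
    have h1 : n + (a + 1) * T' = (n + T') + a * T' := by ring
    rw [h1, ih _ (le_trans hn (Nat.le_add_right _ _)), hp _ hn]

/-- If the first differences of finitely many sequences are eventually periodic,
then the first difference of their pointwise minimum is eventually periodic. -/
theorem delta_min_eventuallyPeriodic (k : ℕ) (hk : 0 < k) (f : Fin k → ℕ → ℚ)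
    (hf : ∀ i, EventuallyPeriodic (fun n => f i (n + 1) - f i n)) :
    EventuallyPeriodic (fun n =>
      (Finset.univ.inf' (Finset.univ_nonempty_iff.mpr ⟨⟨0, hk⟩⟩) fun i => f i (n + 1)) -
        Finset.univ.inf' (Finset.univ_nonempty_iff.mpr ⟨⟨0, hk⟩⟩) fun i => f i n) := by
  classical
  have hne : (Finset.univ : Finset (Fin k)).Nonempty :=
    Finset.univ_nonempty_iff.mpr ⟨⟨0, hk⟩⟩
  choose n₀ Tt hT1 hper using hf
  set T : ℕ := ∏ i, Tt i with hTdef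
  have hT : 1 ≤ T := Finset.one_le_prod' fun i _ => hT1 i
  have hTpos : 0 < T := hT
  set N₀ : ℕ := Finset.univ.sup n₀ with hN₀def
  -- common period for all Δf i
  have hperT : ∀ i n, N₀ ≤ n → f i (n + T + 1) - f i (n + T) = f i (n + 1) - f i n := by
    intro i n hn
    have hdvd : Tt i ∣ T := Finset.dvd_prod_of_mem Tt (Finset.mem_univ i)
    have hn' : n₀ i ≤ n := le_trans (Finset.le_sup (Finset.mem_univ i)) hn
    have := per_mul (fun n => f i (n + 1) - f i n) (n₀ i) (Tt i) (hper i)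
      (T / Tt i) n hn'
    have hTeq : T / Tt i * Tt i = T := Nat.div_mul_cancel hdvd
    rw [hTeq] at this
    simpa using this
  set c : Fin k → ℚ := fun i => f i (N₀ + T) - f i N₀ with hcdef
  have hstep : ∀ i n, N₀ ≤ n → f i (n + T) = f i n + c i := by
    intro i n hn
    induction n, hn using Nat.le_induction with
    | base => simp [hcdef]
    | succ n hn ih =>
      have h1 := hperT i n hn
      have : n + 1 + T = n + T + 1 := by ring
      rw [this]
      linarith
  have hiter : ∀ i s n, N₀ ≤ n → f i (n + s * T) = f i n + s * c i := by
    intro i s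
    induction s with
    | zero => simp
    | succ s ih =>
      intro n hn
      have h1 : n + (s + 1) * T = (n + s * T) + T := by ring
      rw [h1, hstep i _ (le_trans hn (Nat.le_add_right _ _)), ih n hn]
      push_cast
      ring
  set cmin : ℚ := Finset.univ.inf' hne c with hcmin
  obtain ⟨j, -, hj⟩ := Finset.exists_mem_eq_inf' hne c
  have hdom : ∀ i, ∃ Ni, ∀ n, Ni ≤ n → c i = cmin ∨ f j n ≤ f i n := by
    intro i
    by_cases hci : c i = cmin
    · exact ⟨0, fun n _ => Or.inl hci⟩
    · have hle : cmin ≤ c i := Finset.inf'_le c (Finset.mem_univ i)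
      have hδ : 0 < c i - cmin := by
        rcases lt_or_eq_of_le hle with h | h
        · linarith
        · exact absurd h.symm hci
      have hIcc : (Finset.Icc N₀ (N₀ + T)).Nonempty := ⟨N₀, by simp⟩
      set B : ℚ := (Finset.Icc N₀ (N₀ + T)).inf' hIcc (fun r => f i r - f j r) with hB
      obtain ⟨m, hm⟩ := exists_nat_ge ((-B) / (c i - cmin))
      have hmδ : -B ≤ (m : ℚ) * (c i - cmin) := by
        rw [div_le_iff₀ hδ] at hm
        linarith
      refine ⟨N₀ + m * T, fun n hn => Or.inr ?_⟩
      have hnN₀ : N₀ ≤ n := le_trans (Nat.le_add_right _ _) hn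
      set s : ℕ := (n - N₀) / T with hs
      set r : ℕ := N₀ + (n - N₀) % T with hr
      have hdm : (n - N₀) % T + (n - N₀) / T * T = n - N₀ := Nat.mod_add_div' _ _
      have hmod : (n - N₀) % T < T := Nat.mod_lt _ hTpos
      have hn_eq : n = r + s * T := by rw [hr, hs]; omega
      have hrmem : r ∈ Finset.Icc N₀ (N₀ + T) := by
        simp only [Finset.mem_Icc]
        omega
      have hsm : m ≤ s := by
        rw [hs, Nat.le_div_iff_mul_le hTpos]
        omega
      have hiri := hiter i s r (Nat.le_add_right _ _)
      have hirj := hiter j s r (Nat.le_add_right _ _)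
      rw [hn_eq, hiri, hirj]
      have hBr : B ≤ f i r - f j r := Finset.inf'_le _ hrmem
      have hcj : c j = cmin := hj.symm
      have hsδ : (m : ℚ) * (c i - cmin) ≤ (s : ℚ) * (c i - cmin) := by
        apply mul_le_mul_of_nonneg_right _ (le_of_lt hδ)
        exact_mod_cast hsm
      rw [hcj]
      nlinarith
  choose Nd hNd using hdom
  set N : ℕ := max N₀ (Finset.univ.sup Nd) with hNdef
  have hNN₀ : N₀ ≤ N := le_max_left _ _
  have hNd' : ∀ i, Nd i ≤ N := fun i =>
    le_trans (Finset.le_sup (Finset.mem_univ i)) (le_max_right _ _)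
  have hg : ∀ n, N ≤ n →
      (Finset.univ.inf' hne fun i => f i (n + T)) =
      (Finset.univ.inf' hne fun i => f i n) + cmin := by
    intro n hn
    have hnN₀ : N₀ ≤ n := le_trans hNN₀ hn
    apply le_antisymm
    · obtain ⟨i₀, -, hi₀⟩ := Finset.exists_mem_eq_inf' hne (fun i => f i n)
      rcases hNd i₀ n (le_trans (hNd' i₀) hn) with h | h
      · calc (Finset.univ.inf' hne fun i => f i (n + T)) ≤ f i₀ (n + T) :=
              Finset.inf'_le _ (Finset.mem_univ i₀)
          _ = f i₀ n + c i₀ := hstep i₀ n hnN₀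
          _ = _ := by rw [h, hi₀]
      · calc (Finset.univ.inf' hne fun i => f i (n + T)) ≤ f j (n + T) :=
              Finset.inf'_le _ (Finset.mem_univ j)
          _ = f j n + c j := hstep j n hnN₀
          _ = f j n + cmin := by rw [hcmin, hj]
          _ ≤ f i₀ n + cmin := by linarith
          _ = _ := by rw [hi₀]
    · apply Finset.le_inf'
      intro i _
      have h1 : (Finset.univ.inf' hne fun i' => f i' n) ≤ f i n :=
        Finset.inf'_le _ (Finset.mem_univ i)
      have h2 : cmin ≤ c i := Finset.inf'_le c (Finset.mem_univ i)
      have h3 := hstep i n hnN₀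
      linarith
  refine ⟨N, T, hT, fun n hn => ?_⟩
  have h1 := hg n hn
  have h2 := hg (n + 1) (le_trans hn (Nat.le_add_right _ _))
  simp only []
  have e1 : n + T + 1 = n + 1 + T := by ring
  rw [e1, h1, h2]
  ring
end

section
/- Let p be a prime, c ∈ ℚ, and q(x) ∈ ℚ[x] a polynomial with rational coefficients. Then the sequence f(n) = min{0, ν_p(q(n)) − c} (with the convention ν_p(0) = +∞, so f(n) = 0 when q(n) = 0) is periodic, with period a power of p. -/
/-- For a prime `p`, `c ∈ ℚ` and a polynomial `q ∈ ℚ[x]`, the sequence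
`f(n) = min {0, ν_p(q(n)) - c}` (with `f(n) = 0` when `q(n) = 0`, by the convention
`ν_p(0) = +∞`) is periodic, with period a power of `p`. -/
theorem min_padicVal_poly_periodic (p : ℕ) (hp : p.Prime) (c : ℚ) (q : Polynomial ℚ) :
    ∃ L : ℕ, ∀ n : ℕ,
      (fun n : ℕ => if q.eval (n : ℚ) = 0 then (0 : ℚ)
          else min 0 ((padicValRat p (q.eval (n : ℚ)) : ℚ) - c)) (n + p ^ L) =
        (fun n : ℕ => if q.eval (n : ℚ) = 0 then (0 : ℚ)
          else min 0 ((padicValRat p (q.eval (n : ℚ)) : ℚ) - c)) n := by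
  haveI : Fact p.Prime := ⟨hp⟩
  obtain ⟨b, hb⟩ := IsLocalization.integerNormalization_map_to_map (nonZeroDivisors ℤ) q
  set Q := IsLocalization.integerNormalization (nonZeroDivisors ℤ) q with hQ
  have hb0 : (b : ℤ) ≠ 0 := nonZeroDivisors.coe_ne_zero b
  have hbQ0 : ((b : ℤ) : ℚ) ≠ 0 := Int.cast_ne_zero.mpr hb0
  have key : ∀ k : ℕ, ((b : ℤ) : ℚ) * q.eval (k : ℚ) = ((Q.eval (k : ℤ) : ℤ) : ℚ) := by
    intro k
    have h := congrArg (Polynomial.eval ((k : ℕ) : ℚ)) hb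
    rw [Polynomial.eval_map] at h
    simp [Polynomial.eval₂_at_natCast, zsmul_eq_mul] at h
    rw [← h]
  set m : ℤ := ⌈c⌉ with hm
  set vb : ℤ := padicValRat p ((b : ℤ) : ℚ) with hvb
  set L : ℕ := (m + vb).toNat with hL
  have hLge : m + vb ≤ (L : ℤ) := Int.self_le_toNat _
  refine ⟨L, fun n => ?_⟩
  -- valuation of nonzero integers divisible by p^L
  have hIdvd : ∀ z : ℤ, z ≠ 0 → (p : ℤ) ^ L ∣ z → (L : ℤ) ≤ padicValRat p (z : ℚ) := by
    intro z hz hdvd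
    rw [padicValRat.of_int]
    have h1 : p ^ L ∣ z.natAbs := by
      rwa [← Int.natAbs_dvd_natAbs, Int.natAbs_pow, Int.natAbs_natCast] at hdvd
    have := (padicValNat_dvd_iff_le (p := p) (Int.natAbs_ne_zero.mpr hz)).mp h1
    simp only [padicValInt]
    exact_mod_cast this
  set a : ℚ := q.eval ((n : ℕ) : ℚ) with ha
  set a' : ℚ := q.eval (((n + p ^ L : ℕ)) : ℚ) with ha'
  set A : ℤ := Q.eval ((n : ℕ) : ℤ) with hA
  set A' : ℤ := Q.eval (((n + p ^ L : ℕ)) : ℤ) with hA'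
  have hkA : ((b : ℤ) : ℚ) * a = (A : ℚ) := key n
  have hkA' : ((b : ℤ) : ℚ) * a' = (A' : ℚ) := key (n + p ^ L)
  have hdvd : (p : ℤ) ^ L ∣ A' - A := by
    have := Polynomial.sub_dvd_eval_sub (((n + p ^ L : ℕ)) : ℤ) ((n : ℕ) : ℤ) Q
    have h2 : (((n + p ^ L : ℕ)) : ℤ) - ((n : ℕ) : ℤ) = (p : ℤ) ^ L := by push_cast; ring
    rwa [h2] at this
  -- if the values differ, the difference has large valuation
  have hdiffval : a' ≠ a → m ≤ padicValRat p (a' - a) := by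
    intro hne
    have hsub : ((b : ℤ) : ℚ) * (a' - a) = ((A' - A : ℤ) : ℚ) := by push_cast; rw [← hkA, ← hkA']; ring
    have hda : a' - a ≠ 0 := sub_ne_zero.mpr hne
    have hAA : (A' - A : ℤ) ≠ 0 := by
      intro h
      rw [h] at hsub
      exact (mul_ne_zero hbQ0 hda) (by simpa using hsub)
    have hv : (L : ℤ) ≤ padicValRat p (((A' - A : ℤ)) : ℚ) := hIdvd _ hAA hdvd
    rw [← hsub, padicValRat.mul hbQ0 hda] at hv
    omega
  -- stability of small valuations
  have stable : ∀ x y : ℚ, x ≠ 0 → y ≠ 0 → (y = x ∨ m ≤ padicValRat p (y - x)) →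
      padicValRat p x < m → padicValRat p y = padicValRat p x := by
    intro x y hx hy hd hlt
    rcases hd with rfl | hd
    · rfl
    · by_cases hyx : y = x
      · rw [hyx]
      have hdne : y - x ≠ 0 := sub_ne_zero.mpr hyx
      have hne : padicValRat p x ≠ padicValRat p (y - x) := by omega
      have : y = x + (y - x) := by ring
      rw [this, padicValRat.add_eq_min (by rwa [← this]) hx hdne hne]
      omega
  -- large valuation implies f = 0
  have hbig : ∀ x : ℚ, x ≠ 0 → m ≤ padicValRat p x →
      min 0 ((padicValRat p x : ℚ) - c) = 0 := by
    intro x hx hmx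
    have : c ≤ (padicValRat p x : ℚ) := le_trans (Int.le_ceil c) (by exact_mod_cast hmx)
    exact min_eq_left (by linarith)
  simp only
  rw [← ha, ← ha']
  by_cases h1 : a = 0 <;> by_cases h2 : a' = 0
  · simp [h1, h2]
  · -- a = 0, a' ≠ 0
    rw [if_neg h2, if_pos h1]
    have hAz : (A : ℚ) = 0 := by rw [← hkA, h1, mul_zero]
    have hAz' : A = 0 := by exact_mod_cast hAz
    have hA'ne : A' ≠ 0 := by
      intro h
      apply mul_ne_zero hbQ0 h2
      rw [hkA', h, Int.cast_zero]
    have hv : (L : ℤ) ≤ padicValRat p ((A' : ℤ) : ℚ) := by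
      apply hIdvd _ hA'ne
      have := hdvd; rwa [hAz', sub_zero] at this
    rw [← hkA', padicValRat.mul hbQ0 h2] at hv
    exact hbig a' h2 (by omega)
  · -- a ≠ 0, a' = 0
    rw [if_pos h2, if_neg h1]
    have hAz' : (A' : ℚ) = 0 := by rw [← hkA', h2, mul_zero]
    have hAz'' : A' = 0 := by exact_mod_cast hAz'
    have hAne : A ≠ 0 := by
      intro h
      apply mul_ne_zero hbQ0 h1
      rw [hkA, h, Int.cast_zero]
    have hv : (L : ℤ) ≤ padicValRat p ((A : ℤ) : ℚ) := by
      apply hIdvd _ hAne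
      have := (dvd_neg).mpr hdvd
      rwa [hAz'', zero_sub, neg_neg] at this
    rw [← hkA, padicValRat.mul hbQ0 h1] at hv
    exact (hbig a h1 (by omega)).symm
  · rw [if_neg h1, if_neg h2]
    by_cases h3 : padicValRat p a < m
    · have hd : a' = a ∨ m ≤ padicValRat p (a' - a) := by
        by_cases h : a' = a
        · exact Or.inl h
        · exact Or.inr (hdiffval h)
      rw [stable a a' h1 h2 hd h3]
    · by_cases h4 : padicValRat p a' < m
      · have hd : a = a' ∨ m ≤ padicValRat p (a - a') := by
          by_cases h : a' = a
          · exact Or.inl h.symm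
          · refine Or.inr ?_
            have := hdiffval h
            rwa [← padicValRat.neg, neg_sub] at this
        have := stable a' a h2 h1 hd h4
        omega
      · rw [hbig a h1 (by omega), hbig a' h2 (by omega)]
end

section
/- Let p be a prime, Q : ℕ → ℤ a sequence, and suppose there exist n₀, D ∈ ℕ and T ≥ 1 such that Q(n+T) ≡ Q(n) (mod p^D) for all n ≥ n₀. Then for every rational c ≤ D, the sequence f(n) = min{0, ν_p(Q(n)) − c} is eventually periodic with period dividing T. -/
private lemma padicValInt_eq_of_dvd_sub {p : ℕ} [hp : Fact p.Prime] {D : ℕ} {a b : ℤ}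
    (ha : ¬ (p : ℤ) ^ D ∣ a) (hab : (p : ℤ) ^ D ∣ b - a) :
    padicValInt p b = padicValInt p a := by
  have ha0 : a ≠ 0 := by rintro rfl; exact ha (dvd_zero _)
  have hb0 : b ≠ 0 := by
    rintro rfl; exact ha (by simpa using (dvd_neg.2 hab))
  have hνa : padicValInt p a < D := by
    by_contra h
    exact ha ((padicValInt_dvd_iff D a).2 (Or.inr (le_of_not_gt h)))
  set ν := padicValInt p a with hν
  have h1 : (p : ℤ) ^ ν ∣ b := by
    have hd : (p : ℤ) ^ ν ∣ b - a := dvd_trans (pow_dvd_pow _ hνa.le) hab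
    simpa using dvd_add hd (padicValInt_dvd a)
  have h2 : ¬ (p : ℤ) ^ (ν + 1) ∣ b := by
    intro hdvd
    have hd : (p : ℤ) ^ (ν + 1) ∣ b - a := dvd_trans (pow_dvd_pow _ hνa) hab
    have : (p : ℤ) ^ (ν + 1) ∣ a := by simpa using dvd_sub hdvd hd
    have := (padicValInt_dvd_iff (ν + 1) a).1 this
    omega
  have hle : ν ≤ padicValInt p b := by
    rcases (padicValInt_dvd_iff ν b).1 h1 with h | h
    · exact absurd h hb0
    · exact h
  have hlt : padicValInt p b < ν + 1 := by
    by_contra h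
    exact h2 ((padicValInt_dvd_iff (ν + 1) b).2 (Or.inr (le_of_not_gt h)))
  omega

/-- Let `p` be a prime and `Q : ℕ → ℤ` a sequence such that `Q(n+T) ≡ Q(n) (mod p^D)`
for all `n ≥ n₀`, where `T ≥ 1`. Then for every rational `c ≤ D`, the sequence
`f(n) = min {0, ν_p(Q(n)) - c}` (with `f(n) = 0` when `Q(n) = 0`) is eventually
periodic with period dividing `T`. -/
theorem min_padicVal_seq_eventuallyPeriodic (p : ℕ) (hp : p.Prime) (Q : ℕ → ℤ)
    (n₀ D T : ℕ) (hT : 1 ≤ T)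
    (hQ : ∀ n, n₀ ≤ n → Q (n + T) ≡ Q n [ZMOD ((p : ℤ) ^ D)])
    (c : ℚ) (hc : c ≤ (D : ℚ)) :
    ∃ n₁ T' : ℕ, 1 ≤ T' ∧ T' ∣ T ∧ ∀ n, n₁ ≤ n →
      (fun n : ℕ => if Q n = 0 then (0 : ℚ)
          else min 0 ((padicValInt p (Q n) : ℚ) - c)) (n + T') =
        (fun n : ℕ => if Q n = 0 then (0 : ℚ)
          else min 0 ((padicValInt p (Q n) : ℚ) - c)) n := by
  haveI : Fact p.Prime := ⟨hp⟩
  refine ⟨n₀, T, hT, dvd_refl T, fun n hn => ?_⟩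
  simp only
  have hdvd : (p : ℤ) ^ D ∣ Q n - Q (n + T) := (hQ n hn).dvd
  have key : ∀ m : ℤ, (p : ℤ) ^ D ∣ m →
      (if m = 0 then (0 : ℚ) else min 0 ((padicValInt p m : ℚ) - c)) = 0 := by
    intro m hm
    by_cases h0 : m = 0
    · simp [h0]
    · have hD : D ≤ padicValInt p m := ((padicValInt_dvd_iff D m).1 hm).resolve_left h0
      have : c ≤ (padicValInt p m : ℚ) := hc.trans (by exact_mod_cast hD)
      simp [h0, min_eq_left, sub_nonneg.2 this]
  by_cases hD : (p : ℤ) ^ D ∣ Q n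
  · have h2 : (p : ℤ) ^ D ∣ Q (n + T) := by simpa using dvd_sub hD hdvd
    rw [key _ h2, key _ hD]
  · have h0 : Q n ≠ 0 := by rintro h; exact hD (h ▸ dvd_zero _)
    have h0' : Q (n + T) ≠ 0 := by
      rintro h; exact hD (by simpa [h] using hdvd)
    have hval : padicValInt p (Q (n + T)) = padicValInt p (Q n) :=
      padicValInt_eq_of_dvd_sub hD (by simpa using (dvd_neg.2 hdvd))
    simp [h0, h0', hval]
end

section
/- Let p be a prime and let J ∈ ℤ^{s×s} be a single Jordan block with integer eigenvalue λ ≠ 0. Then the sequence n ↦ ν_p(J^{n+1}) − ν_p(J^n) is periodic. -/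
/-!
Write `J = λ + N` with `N ^ s = 0` and take `T = p ^ L` with `L = s (v_p λ + 1)`. In the binomial
expansion `J ^ T = ∑ C(T, k) λ ^ (T - k) N ^ k` only `k < s` contributes, and for `0 < k < s`
Kummer's `v_p C(p ^ L, k) = L - v_p k` makes the term divisible by `p ^ (T v_p λ + 1)`. Hence
`J ^ (n + T) = λ ^ T J ^ n + J ^ n E` with every entry of `J ^ n E` divisible by a higher power of
`p` than `ν_p(λ ^ T J ^ n)`, so `ν_p(J ^ (n + T)) = ν_p(J ^ n) + T v_p λ` and the difference
sequence has period `T`.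
-/

/-- The `p`-adic valuation of a nonzero integer matrix: the minimum of the `p`-adic
valuations of its nonzero entries. -/
noncomputable def matPadicVal (p : ℕ) {a b : Type*} [Fintype a] [Fintype b]
    (M : Matrix a b ℤ) : ℕ :=
  sInf {v : ℕ | ∃ i j, M i j ≠ 0 ∧ padicValInt p (M i j) = v}

/-- A single `s × s` Jordan block with eigenvalue `λ`. -/
def jordanBlock (s : ℕ) (lam : ℤ) : Matrix (Fin s) (Fin s) ℤ :=
  fun i j => if i = j then lam else if (i : ℕ) + 1 = (j : ℕ) then 1 else 0

open Finset

namespace Matrix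

theorem dvd_mul_apply_of_dvd {m n o R : Type*} [Fintype n] [CommSemiring R] {a b : R}
    {A : Matrix m n R} {B : Matrix n o R}
    (hA : ∀ i j, a ∣ A i j) (hB : ∀ i j, b ∣ B i j) (i : m) (k : o) :
    a * b ∣ (A * B) i k :=
  dvd_sum fun j _ => mul_dvd_mul (hA i j) (hB j k)

variable {R : Type*} [Semiring R] {s : ℕ} {M : Matrix (Fin s) (Fin s) R}

theorem pow_apply_eq_zero_of_lt_add (hM : ∀ i j, j ≤ i → M i j = 0) (k : ℕ) (i j : Fin s)
    (hij : (j : ℕ) < i + k) :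
    (M ^ k) i j = 0 := by
  induction k generalizing j with
  | zero => exact one_apply_ne (Fin.ne_of_val_ne (by omega))
  | succ k ih =>
    rw [pow_succ, mul_apply]
    refine sum_eq_zero fun l _ => ?_
    rcases lt_or_ge (l : ℕ) (i + k) with hl | hl
    · rw [ih l hl, zero_mul]
    · rw [hM l j (by omega), mul_zero]

theorem pow_eq_zero_of_strictlyUpperTriangular (hM : ∀ i j, j ≤ i → M i j = 0) : M ^ s = 0 :=
  ext fun i j => pow_apply_eq_zero_of_lt_add hM s i j (by omega)

end Matrix

theorem Nat.pow_sub_dvd_choose_prime_pow {p L k : ℕ} (hp : p.Prime) (hk0 : k ≠ 0)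
    (hk : k ≤ p ^ L) : p ^ (L - k) ∣ (p ^ L).choose k := by
  refine (Nat.pow_dvd_pow p ?_).trans (Nat.ordProj_dvd _ p)
  rw [Nat.factorization_choose_prime_pow hp hk hk0]
  have := k.factorization_lt p hk0
  omega

section matPadicVal

variable {p : ℕ} {ι κ : Type*} [Fintype ι] [Fintype κ]

theorem exists_padicValInt_eq_matPadicVal {M : Matrix ι κ ℤ} (hM : M ≠ 0) :
    ∃ i j, M i j ≠ 0 ∧ padicValInt p (M i j) = matPadicVal p M := by
  obtain ⟨i, j, hij⟩ : ∃ i j, M i j ≠ 0 := by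
    by_contra! h
    exact hM (Matrix.ext h)
  exact Nat.sInf_mem (s := {v | ∃ i j, M i j ≠ 0 ∧ padicValInt p (M i j) = v})
    ⟨_, i, j, hij, rfl⟩

variable [Fact p.Prime]

theorem le_matPadicVal_iff {M : Matrix ι κ ℤ} (hM : M ≠ 0) {m : ℕ} :
    m ≤ matPadicVal p M ↔ ∀ i j, (p : ℤ) ^ m ∣ M i j := by
  constructor
  · intro hm i j
    by_cases hij : M i j = 0
    · simp [hij]
    · exact (padicValInt_dvd_iff m _).mpr (.inr (hm.trans (Nat.sInf_le ⟨i, j, hij, rfl⟩)))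
  · intro h
    obtain ⟨i, j, hij, hv⟩ := exists_padicValInt_eq_matPadicVal (p := p) hM
    exact hv ▸ ((padicValInt_dvd_iff m _).mp (h i j)).resolve_left hij

theorem matPadicVal_smul {c : ℤ} (hc : c ≠ 0) {M : Matrix ι κ ℤ} (hM : M ≠ 0) :
    matPadicVal p (c • M) = padicValInt p c + matPadicVal p M := by
  have hcM : c • M ≠ 0 := smul_ne_zero hc hM
  refine le_antisymm ?_ ((le_matPadicVal_iff hcM).mpr fun i j => ?_)
  · obtain ⟨i, j, hij, hv⟩ := exists_padicValInt_eq_matPadicVal (p := p) hM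
    by_contra! hlt
    have hval := ((padicValInt_dvd_iff _ _).mp ((le_matPadicVal_iff hcM).mp hlt i j)).resolve_left
      (mul_ne_zero hc hij)
    rw [Matrix.smul_apply, smul_eq_mul, padicValInt.mul hc hij, hv] at hval
    omega
  · rw [pow_add, Matrix.smul_apply, smul_eq_mul]
    exact mul_dvd_mul (padicValInt_dvd c) ((le_matPadicVal_iff hM).mp le_rfl i j)

theorem matPadicVal_add_of_dvd {A B : Matrix ι κ ℤ} (hA : A ≠ 0)
    (hB : ∀ i j, (p : ℤ) ^ (matPadicVal p A + 1) ∣ B i j) :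
    matPadicVal p (A + B) = matPadicVal p A := by
  set m := matPadicVal p A
  obtain ⟨i, j, hij, hv⟩ := exists_padicValInt_eq_matPadicVal (p := p) hA
  have hndvd : ¬ (p : ℤ) ^ (m + 1) ∣ (A + B) i j := fun h => by
    have := ((padicValInt_dvd_iff _ _).mp ((dvd_add_left (hB i j)).mp h)).resolve_left hij
    omega
  have hAB : A + B ≠ 0 := fun h => hndvd (by rw [h]; exact dvd_zero _)
  refine le_antisymm ?_ ((le_matPadicVal_iff hAB).mpr fun i j => ?_)
  · by_contra! hlt
    exact hndvd ((le_matPadicVal_iff hAB).mp hlt i j)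
  · exact dvd_add ((le_matPadicVal_iff hA).mp le_rfl i j)
      ((pow_dvd_pow _ m.le_succ).trans (hB i j))

end matPadicVal

def jordanPeriod (p s : ℕ) (lam : ℤ) : ℕ :=
  p ^ (s * (padicValInt p lam + 1))

section jordanPeriod

variable {p : ℕ} [hp : Fact p.Prime] {s : ℕ} {lam : ℤ}

theorem pow_dvd_choose_jordanPeriod_mul_pow {k : ℕ} (hk0 : k ≠ 0) (hks : k < s) :
    (p : ℤ) ^ (jordanPeriod p s lam * padicValInt p lam + 1) ∣
      ((jordanPeriod p s lam).choose k : ℤ) * lam ^ (jordanPeriod p s lam - k) := by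
  set v := padicValInt p lam
  set T := jordanPeriod p s lam
  have hkT : k ≤ T := by
    have : s * (v + 1) < T := Nat.lt_pow_self hp.out.one_lt
    nlinarith
  have hchoose : (p : ℤ) ^ (k * v + 1) ∣ (T.choose k : ℤ) := by
    have hkv : k * v ≤ s * v := Nat.mul_le_mul_right v hks.le
    have := (Nat.pow_dvd_pow p (by rw [Nat.mul_succ]; omega : k * v + 1 ≤ s * (v + 1) - k)).trans
      (Nat.pow_sub_dvd_choose_prime_pow hp.out hk0 hkT)
    exact_mod_cast this
  have hlam : (p : ℤ) ^ ((T - k) * v) ∣ lam ^ (T - k) := by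
    rw [mul_comm, pow_mul]
    exact pow_dvd_pow_of_dvd (padicValInt_dvd lam) _
  have hexp : T * v + 1 = (k * v + 1) + (T - k) * v := by
    zify [hkT]
    ring
  rw [hexp, pow_add]
  exact mul_dvd_mul hchoose hlam

variable {ι : Type*} [Fintype ι] [DecidableEq ι] {A : Matrix ι ι ℤ}

theorem dvd_pow_jordanPeriod_sub_smul_one_apply (hA : (A - lam • 1) ^ s = 0) (i j : ι) :
    (p : ℤ) ^ (jordanPeriod p s lam * padicValInt p lam + 1) ∣
      (A ^ jordanPeriod p s lam - lam ^ jordanPeriod p s lam • 1) i j := by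
  set T := jordanPeriod p s lam
  set N := A - lam • 1
  have hcomm : Commute N (lam • 1) := (Commute.one_right N).smul_right lam
  have hsum : A ^ T - lam ^ T • 1 =
      ∑ k ∈ range T, ((T.choose (k + 1) : ℤ) * lam ^ (T - (k + 1))) • N ^ (k + 1) := by
    rw [← sub_add_cancel A (lam • 1), hcomm.add_pow, sum_range_succ']
    simp only [pow_zero, one_mul, Nat.sub_zero, Nat.choose_zero_right, Nat.cast_one, mul_one,
      smul_pow, one_pow, add_sub_cancel_right]
    refine sum_congr rfl fun k _ => ?_
    rw [mul_smul_comm, mul_one, ← nsmul_eq_mul', ← Nat.cast_smul_eq_nsmul ℤ, smul_smul]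
  rw [hsum, Matrix.sum_apply]
  refine dvd_sum fun k _ => ?_
  rw [Matrix.smul_apply, smul_eq_mul]
  rcases lt_or_ge (k + 1) s with hks | hks
  · exact dvd_mul_of_dvd_left (pow_dvd_choose_jordanPeriod_mul_pow k.succ_ne_zero hks) _
  · rw [pow_eq_zero_of_le hks hA, Matrix.zero_apply, mul_zero]
    exact dvd_zero _

theorem pow_ne_zero_of_isNilpotent_sub_smul_one [Nonempty ι] (hlam : lam ≠ 0)
    (hA : IsNilpotent (A - lam • 1)) (n : ℕ) : A ^ n ≠ 0 := by
  intro hAn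
  have hcomm : Commute A (A - lam • 1) :=
    (Commute.refl A).sub_right ((Commute.one_right A).smul_right lam)
  obtain ⟨m, hm⟩ : IsNilpotent (lam • 1 : Matrix ι ι ℤ) := by
    simpa using hcomm.isNilpotent_sub ⟨n, hAn⟩ hA
  obtain ⟨i⟩ := ‹Nonempty ι›
  have hii := congrFun (congrFun hm i) i
  rw [smul_pow, one_pow, Matrix.smul_apply, Matrix.one_apply_eq, smul_eq_mul, mul_one,
    Matrix.zero_apply] at hii
  exact pow_ne_zero m hlam hii

theorem matPadicVal_pow_add_jordanPeriod [Nonempty ι] (hlam : lam ≠ 0)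
    (hA : (A - lam • 1) ^ s = 0) (n : ℕ) :
    matPadicVal p (A ^ (n + jordanPeriod p s lam)) =
      matPadicVal p (A ^ n) + jordanPeriod p s lam * padicValInt p lam := by
  set T := jordanPeriod p s lam
  have hAn : A ^ n ≠ 0 := pow_ne_zero_of_isNilpotent_sub_smul_one hlam ⟨s, hA⟩ n
  have hval : padicValInt p (lam ^ T) = T * padicValInt p lam := by
    simp [padicValInt, Int.natAbs_pow]
  have hsplit : A ^ (n + T) = lam ^ T • A ^ n + A ^ n * (A ^ T - lam ^ T • 1) := by
    rw [pow_add, mul_sub, mul_smul_comm, mul_one, add_sub_cancel]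
  have hsmall : ∀ i j, (p : ℤ) ^ (matPadicVal p (lam ^ T • A ^ n) + 1) ∣
      (A ^ n * (A ^ T - lam ^ T • 1)) i j := by
    rw [matPadicVal_smul (pow_ne_zero T hlam) hAn, hval, add_comm (T * _), add_assoc, pow_add]
    exact Matrix.dvd_mul_apply_of_dvd ((le_matPadicVal_iff hAn).mp le_rfl)
      (dvd_pow_jordanPeriod_sub_smul_one_apply hA)
  rw [hsplit, matPadicVal_add_of_dvd (smul_ne_zero (pow_ne_zero T hlam) hAn) hsmall,
    matPadicVal_smul (pow_ne_zero T hlam) hAn, hval, add_comm]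

end jordanPeriod

theorem jordanBlock_sub_smul_one_pow_eq_zero (s : ℕ) (lam : ℤ) :
    (jordanBlock s lam - lam • 1) ^ s = 0 :=
  Matrix.pow_eq_zero_of_strictlyUpperTriangular fun i j hji => by
    rcases hji.lt_or_eq with hlt | rfl
    · have : (i : ℕ) + 1 ≠ j := by omega
      simp only [Matrix.sub_apply, Matrix.smul_apply, Matrix.one_apply_ne hlt.ne', jordanBlock,
        if_neg hlt.ne', if_neg this, smul_zero, sub_zero]
    · simp only [Matrix.sub_apply, Matrix.smul_apply, Matrix.one_apply_eq, jordanBlock, if_pos,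
        smul_eq_mul, mul_one, sub_self]

/-- For a single Jordan block `J` with nonzero integer eigenvalue, the sequence
`n ↦ ν_p(J^{n+1}) - ν_p(J^n)` is periodic. -/
theorem matPadicVal_jordanBlock_diff_periodic (p : ℕ) (hp : p.Prime) (s : ℕ)
    (hs : 0 < s) (lam : ℤ) (hlam : lam ≠ 0) :
    ∃ T : ℕ, 1 ≤ T ∧ ∀ n : ℕ,
      (matPadicVal p ((jordanBlock s lam) ^ (n + T + 1)) : ℤ) -
          matPadicVal p ((jordanBlock s lam) ^ (n + T)) =
        (matPadicVal p ((jordanBlock s lam) ^ (n + 1)) : ℤ) -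
          matPadicVal p ((jordanBlock s lam) ^ n) := by
  have : Fact p.Prime := ⟨hp⟩
  have : Nonempty (Fin s) := ⟨⟨0, hs⟩⟩
  have hshift := matPadicVal_pow_add_jordanPeriod (p := p) hlam
    (jordanBlock_sub_smul_one_pow_eq_zero s lam)
  refine ⟨jordanPeriod p s lam, Nat.one_le_pow _ _ hp.pos, fun n => ?_⟩
  rw [add_right_comm, hshift, hshift]
  push_cast
  ring
end
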